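/- Forward-backward edge decomposition: with f the forward partition function and b the backward partition function, the total weight of all monotone alignments of z_{1..N} to x_{1..T} that align z_j to x_i equals f_{i,j} · b_{i,j} / c_{i,j}. Consequently Σ_i f_{i,j}·b_{i,j}/c_{i,j} = f_{T,N} for every fixed j, so the edge marginals w_{i,j} = f_{i,j}b_{i,j}/(c_{i,j}·f_{T,N}) form a probability distribution over i for each j. -/

import Mathlib

open scoped Classical

/-- Forward partition function: total weight of monotone alignments of `z_{1..j}` to
`x_{1..i}` with `z_j` aligned to `x_i` (strictly increasing `φ : {1,…,j} → {1,…,i}`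
with `φ j = i`), with weight `∏_{k=1}^j c (φ k) k`. Maps are encoded 0-based as
strictly monotone `Fin j → Fin i`. -/
noncomputable def fwd (c : ℕ → ℕ → ℝ) (i j : ℕ) : ℝ :=
  ∑ φ ∈ Finset.univ.filter
      (fun φ : Fin j → Fin i =>
        StrictMono φ ∧ ∀ k : Fin j, (k : ℕ) = j - 1 → ((φ k : Fin i) : ℕ) = i - 1),
    ∏ k : Fin j, c ((φ k : ℕ) + 1) ((k : ℕ) + 1)

/-- Backward partition function: total weight of monotone alignments of `z_{j..N}` to
`x_{i..T}` (strictly increasing `ψ : {j,…,N} → {i,…,T}` with `ψ j = i` and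
`ψ N = T`), with weight `∏_{k=j}^N c (ψ k) k`. -/
noncomputable def bwd (c : ℕ → ℕ → ℝ) (T N i j : ℕ) : ℝ :=
  ∑ ψ ∈ Finset.univ.filter
      (fun ψ : Fin (N - j + 1) → Fin (T - i + 1) =>
        StrictMono ψ ∧ (∀ k : Fin (N - j + 1), (k : ℕ) = 0 → ((ψ k : Fin (T - i + 1)) : ℕ) = 0)
          ∧ (∀ k : Fin (N - j + 1), (k : ℕ) = N - j → ((ψ k : Fin (T - i + 1)) : ℕ) = T - i)),
    ∏ k : Fin (N - j + 1), c (i + (ψ k : ℕ)) (j + (k : ℕ))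

/-!
Fix the cell `(i, j)`. An alignment `φ` with `φ j = i` is the same thing as the pair of its
restrictions to `{1, …, j}` (an alignment counted by `f_{i,j}`) and to `{j, …, N}` (one counted by
`b_{i,j}`); conversely two such pieces glue along the shared cell, and the glued map is strictly
monotone because each piece is strictly monotone on its side of `j`. The weight of `φ` times
`c_{i,j}` is the product of the weights of the pieces, which gives the first identity. Sorting all
alignments by the position `i` to which `z_j` is sent gives the second, and the third follows
since `f_{T,N} > 0`.
-/

open Finset

theorem Fin.prod_univ_mul_eq_prod_mul_prod {M : Type*} [CommMonoid M] {N j : ℕ} (m : Fin N)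
    (hm : (m : ℕ) + 1 = j) (F : Fin N → M) :
    (∏ k, F k) * F m
      = (∏ k : Fin j, F ⟨k, by omega⟩) * ∏ k : Fin (N - j + 1), F ⟨m + k, by omega⟩ := by
  let f : ℕ → M := fun k => if h : k < N then F ⟨k, h⟩ else 1
  have hf : ∀ (k : ℕ) (h : k < N), F ⟨k, h⟩ = f k := fun k h => by simp [f, h]
  have hsplit : ∏ k ∈ range N, f k
      = (∏ k ∈ range m, f k) * ∏ k ∈ range (N - j + 1), f (m + k) := by
    rw [← prod_range_add]; congr; omega
  have hpre : ∏ k ∈ range j, f k = (∏ k ∈ range m, f k) * f m := by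
    rw [← prod_range_succ, hm]
  simp only [hf]
  rw [Fin.prod_univ_eq_prod_range f, Fin.prod_univ_eq_prod_range f,
    Fin.prod_univ_eq_prod_range (fun k => f (m + k)), hsplit, hpre, mul_right_comm]

section Alignments

variable {T N i j : ℕ}

def alignments (i j : ℕ) : Finset (Fin j → Fin i) :=
  univ.filter fun φ => StrictMono φ ∧ ∀ k : Fin j, (k : ℕ) = j - 1 → (φ k : ℕ) = i - 1

def alignmentWeight (c : ℕ → ℕ → ℝ) (φ : Fin j → Fin i) : ℝ :=
  ∏ k, c ((φ k : ℕ) + 1) ((k : ℕ) + 1)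

theorem fwd_eq_sum (c : ℕ → ℕ → ℝ) (i j : ℕ) :
    fwd c i j = ∑ φ ∈ alignments i j, alignmentWeight c φ := rfl

def tailAlignments (T N i j : ℕ) : Finset (Fin (N - j + 1) → Fin (T - i + 1)) :=
  univ.filter fun ψ => StrictMono ψ ∧ (∀ k : Fin (N - j + 1), (k : ℕ) = 0 → (ψ k : ℕ) = 0)
    ∧ ∀ k : Fin (N - j + 1), (k : ℕ) = N - j → (ψ k : ℕ) = T - i

def tailWeight {n t : ℕ} (c : ℕ → ℕ → ℝ) (i j : ℕ) (ψ : Fin n → Fin t) : ℝ :=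
  ∏ k, c (i + (ψ k : ℕ)) (j + (k : ℕ))

theorem bwd_eq_sum (c : ℕ → ℕ → ℝ) (T N i j : ℕ) :
    bwd c T N i j = ∑ ψ ∈ tailAlignments T N i j, tailWeight c i j ψ := rfl

/-- The alignments sending `z_{m+1}` to `x_i` (the `Fin` indices are 0-based). -/
def alignmentsThrough (T N i : ℕ) (m : Fin N) : Finset (Fin N → Fin T) :=
  (alignments T N).filter fun φ => (φ m : ℕ) + 1 = i

theorem mem_alignments {φ : Fin j → Fin i} :
    φ ∈ alignments i j ↔ StrictMono φ ∧ ∀ k : Fin j, (k : ℕ) = j - 1 → (φ k : ℕ) = i - 1 := by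
  simp [alignments]

theorem mem_tailAlignments {ψ : Fin (N - j + 1) → Fin (T - i + 1)} :
    ψ ∈ tailAlignments T N i j ↔ StrictMono ψ ∧ (∀ k : Fin (N - j + 1), (k : ℕ) = 0 → (ψ k : ℕ) = 0)
      ∧ ∀ k : Fin (N - j + 1), (k : ℕ) = N - j → (ψ k : ℕ) = T - i := by
  simp [tailAlignments]

theorem mem_alignmentsThrough {m : Fin N} {φ : Fin N → Fin T} :
    φ ∈ alignmentsThrough T N i m ↔ φ ∈ alignments T N ∧ (φ m : ℕ) + 1 = i :=
  mem_filter

theorem alignmentsThrough_eq_filter (hN : N - 1 < N) (hi : 1 ≤ i) (m : Fin N) :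
    alignmentsThrough T N i m = univ.filter fun φ : Fin N → Fin T =>
      StrictMono φ ∧ (φ ⟨N - 1, hN⟩ : ℕ) = T - 1 ∧ (φ m : ℕ) = i - 1 := by
  ext φ
  simp only [mem_alignmentsThrough, mem_alignments, mem_filter, mem_univ, true_and]
  constructor
  · rintro ⟨⟨hmono, hlast⟩, hm⟩
    exact ⟨hmono, hlast _ rfl, by omega⟩
  · rintro ⟨hmono, hlast, hm⟩
    exact ⟨⟨hmono, fun k hk => by rwa [show k = ⟨N - 1, hN⟩ from Fin.ext hk]⟩, by omega⟩

theorem fwd_pos {c : ℕ → ℕ → ℝ} (hc : ∀ i j, 0 < c i j) (h : j ≤ i) : 0 < fwd c i j := by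
  rw [fwd_eq_sum]
  refine sum_pos (fun φ _ => prod_pos fun k _ => hc _ _) ⟨fun k => ⟨k + (i - j), by omega⟩, ?_⟩
  refine mem_alignments.2 ⟨fun a b hab => ?_, fun k hk => ?_⟩
  · simp only [Fin.mk_lt_mk]; omega
  · simp only; omega

theorem sum_Icc_sum_alignmentsThrough {M : Type*} [AddCommMonoid M] (m : Fin N)
    (w : (Fin N → Fin T) → M) :
    ∑ i ∈ Icc 1 T, ∑ φ ∈ alignmentsThrough T N i m, w φ = ∑ φ ∈ alignments T N, w φ :=
  sum_fiberwise_of_maps_to (fun φ _ => mem_Icc.2 ⟨by omega, (φ m).isLt⟩) w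

variable {m : Fin N}

/-- The `min` only matters off `alignmentsThrough T N i m`, where it keeps the values in `Fin i`. -/
def alignmentPrefix (hi : 1 ≤ i) (hm : (m : ℕ) + 1 = j) (φ : Fin N → Fin T) : Fin j → Fin i :=
  fun k => ⟨min (φ ⟨k, by omega⟩) (i - 1), by omega⟩

def alignmentSuffix (hm : (m : ℕ) + 1 = j) (φ : Fin N → Fin T) :
    Fin (N - j + 1) → Fin (T - i + 1) :=
  fun k => ⟨φ ⟨m + k, by omega⟩ - (i - 1), by omega⟩

def alignmentGlue (hi : 1 ≤ i) (hiT : i ≤ T) (pre : Fin j → Fin i)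
    (suf : Fin (N - j + 1) → Fin (T - i + 1)) : Fin N → Fin T :=
  fun k => if h : (k : ℕ) < j then Fin.castLE hiT (pre ⟨k, h⟩)
    else ⟨i - 1 + suf ⟨k + 1 - j, by omega⟩, by omega⟩

theorem alignmentPrefix_val (hi : 1 ≤ i) (hm : (m : ℕ) + 1 = j) {φ : Fin N → Fin T}
    (hφ : Monotone φ) (hpiv : (φ m : ℕ) + 1 = i) (k : Fin j) :
    (alignmentPrefix hi hm φ k : ℕ) = φ ⟨k, by omega⟩ := by
  have : φ ⟨k, by omega⟩ ≤ φ m := hφ (Fin.le_def.2 (by simp only; omega))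
  simp only [alignmentPrefix, Fin.le_def] at this ⊢
  omega

theorem alignmentSuffix_val (hm : (m : ℕ) + 1 = j) {φ : Fin N → Fin T} (hφ : Monotone φ)
    (hpiv : (φ m : ℕ) + 1 = i) (k : Fin (N - j + 1)) :
    i - 1 + (alignmentSuffix (i := i) hm φ k : ℕ) = φ ⟨m + k, by omega⟩ := by
  have : φ m ≤ φ ⟨m + k, by omega⟩ := hφ (Fin.le_def.2 (by simp only; omega))
  simp only [alignmentSuffix, Fin.le_def] at this ⊢
  omega

theorem alignmentGlue_val_of_lt (hi : 1 ≤ i) (hiT : i ≤ T) (pre : Fin j → Fin i)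
    (suf : Fin (N - j + 1) → Fin (T - i + 1)) (k : Fin N) (hk : (k : ℕ) < j) :
    (alignmentGlue hi hiT pre suf k : ℕ) = pre ⟨k, hk⟩ := by
  simp [alignmentGlue, hk]

theorem alignmentGlue_val_of_le (hi : 1 ≤ i) (hiT : i ≤ T) (hm : (m : ℕ) + 1 = j)
    {pre : Fin j → Fin i} {suf : Fin (N - j + 1) → Fin (T - i + 1)} (hpre : pre ∈ alignments i j)
    (hsuf : suf ∈ tailAlignments T N i j) (k : Fin N) (hk : m ≤ k) :
    (alignmentGlue hi hiT pre suf k : ℕ) = i - 1 + suf ⟨k - m, by omega⟩ := by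
  by_cases h : (k : ℕ) < j
  · rw [alignmentGlue_val_of_lt hi hiT pre suf k h, (mem_alignments.1 hpre).2 _ (by simp only; omega),
      (mem_tailAlignments.1 hsuf).2.1 _ (by simp only; omega)]
    rfl
  · simp only [alignmentGlue, h, dite_false, show (k : ℕ) + 1 - j = k - m by omega]

theorem alignmentGlue_mem (hi : 1 ≤ i) (hiT : i ≤ T) (hm : (m : ℕ) + 1 = j)
    {pre : Fin j → Fin i} {suf : Fin (N - j + 1) → Fin (T - i + 1)} (hpre : pre ∈ alignments i j)
    (hsuf : suf ∈ tailAlignments T N i j) :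
    alignmentGlue hi hiT pre suf ∈ alignmentsThrough T N i m := by
  have hval := alignmentGlue_val_of_le hi hiT hm hpre hsuf
  obtain ⟨hsuf_mono, hsuf_first, hsuf_last⟩ := mem_tailAlignments.1 hsuf
  refine mem_alignmentsThrough.2 ⟨mem_alignments.2 ⟨?_, fun k hk => ?_⟩, ?_⟩
  · refine StrictMonoOn.Iic_union_Ici (a := m) (fun a ha b hb hab => ?_) (fun a ha b hb hab => ?_)
    · simp only [Set.mem_Iic, Fin.le_def] at ha hb
      rw [Fin.lt_def, alignmentGlue_val_of_lt hi hiT pre suf a (by omega),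
        alignmentGlue_val_of_lt hi hiT pre suf b (by omega)]
      exact (mem_alignments.1 hpre).1 (Fin.mk_lt_mk.2 hab)
    · rw [Set.mem_Ici] at ha hb
      rw [Fin.lt_def, hval a ha, hval b hb]
      have : suf ⟨a - m, by omega⟩ < suf ⟨b - m, by omega⟩ := hsuf_mono (Fin.mk_lt_mk.2 (by omega))
      rw [Fin.lt_def] at this
      omega
  · rw [hval k (by omega), hsuf_last _ (by simp only; omega)]
    omega
  · rw [hval m le_rfl, hsuf_first _ (by simp)]
    omega

theorem alignmentPrefix_mem (hi : 1 ≤ i) (hm : (m : ℕ) + 1 = j) {φ : Fin N → Fin T}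
    (hφ : φ ∈ alignmentsThrough T N i m) : alignmentPrefix hi hm φ ∈ alignments i j := by
  obtain ⟨hφ, hpiv⟩ := mem_alignmentsThrough.1 hφ
  have hmono := (mem_alignments.1 hφ).1
  have hval := alignmentPrefix_val hi hm hmono.monotone hpiv
  refine mem_alignments.2 ⟨fun a b hab => ?_, fun k hk => ?_⟩
  · rw [Fin.lt_def, hval, hval, ← Fin.lt_def]
    exact hmono (Fin.mk_lt_mk.2 hab)
  · rw [hval, ← hpiv, Nat.add_sub_cancel]
    exact congrArg (fun k => (φ k : ℕ)) (Fin.ext (by simp only; omega))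

theorem alignmentSuffix_mem (hm : (m : ℕ) + 1 = j) {φ : Fin N → Fin T}
    (hφ : φ ∈ alignmentsThrough T N i m) : alignmentSuffix hm φ ∈ tailAlignments T N i j := by
  obtain ⟨hφ, hpiv⟩ := mem_alignmentsThrough.1 hφ
  obtain ⟨hmono, hlast⟩ := mem_alignments.1 hφ
  have hval := alignmentSuffix_val hm hmono.monotone hpiv
  refine mem_tailAlignments.2 ⟨fun a b hab => ?_, fun k hk => ?_, fun k hk => ?_⟩
  · have : φ ⟨m + a, by omega⟩ < φ ⟨m + b, by omega⟩ := hmono (Fin.mk_lt_mk.2 (by omega))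
    rw [Fin.lt_def, ← hval a, ← hval b] at this
    rw [Fin.lt_def]
    omega
  · have := hval k
    simp only [hk, add_zero, Fin.eta] at this
    omega
  · have := hval k
    rw [hlast _ (by simp only; omega)] at this
    omega

theorem alignmentGlue_prefix_suffix (hi : 1 ≤ i) (hiT : i ≤ T) (hm : (m : ℕ) + 1 = j)
    {φ : Fin N → Fin T} (hφ : φ ∈ alignmentsThrough T N i m) :
    alignmentGlue hi hiT (alignmentPrefix hi hm φ) (alignmentSuffix hm φ) = φ := by
  obtain ⟨hφ', hpiv⟩ := mem_alignmentsThrough.1 hφ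
  have hmono := (mem_alignments.1 hφ').1.monotone
  funext k
  apply Fin.ext
  by_cases hk : (k : ℕ) < j
  · rw [alignmentGlue_val_of_lt hi hiT _ _ k hk, alignmentPrefix_val hi hm hmono hpiv]
  · rw [alignmentGlue_val_of_le hi hiT hm (alignmentPrefix_mem hi hm hφ)
      (alignmentSuffix_mem hm hφ) k (Fin.le_def.2 (by omega)), alignmentSuffix_val hm hmono hpiv]
    simp only [show (m : ℕ) + (k - m) = k by omega]

theorem alignmentPrefix_glue (hi : 1 ≤ i) (hiT : i ≤ T) (hm : (m : ℕ) + 1 = j)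
    (pre : Fin j → Fin i) (suf : Fin (N - j + 1) → Fin (T - i + 1)) :
    alignmentPrefix hi hm (alignmentGlue hi hiT pre suf) = pre := by
  funext k
  apply Fin.ext
  have := (pre k).isLt
  simp only [alignmentPrefix, alignmentGlue_val_of_lt hi hiT pre suf ⟨k, by omega⟩ k.isLt, Fin.eta]
  omega

theorem alignmentSuffix_glue (hi : 1 ≤ i) (hiT : i ≤ T) (hm : (m : ℕ) + 1 = j)
    {pre : Fin j → Fin i} {suf : Fin (N - j + 1) → Fin (T - i + 1)}
    (hpre : pre ∈ alignments i j) (hsuf : suf ∈ tailAlignments T N i j) :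
    alignmentSuffix hm (alignmentGlue hi hiT pre suf) = suf := by
  funext k
  apply Fin.ext
  simp only [alignmentSuffix]
  rw [alignmentGlue_val_of_le hi hiT hm hpre hsuf _ (Fin.le_def.2 (by simp only; omega))]
  simp

theorem alignmentWeight_mul (c : ℕ → ℕ → ℝ) (hi : 1 ≤ i) (hm : (m : ℕ) + 1 = j)
    {φ : Fin N → Fin T} (hφ : φ ∈ alignmentsThrough T N i m) :
    alignmentWeight c φ * c i j
      = alignmentWeight c (alignmentPrefix hi hm φ)
        * tailWeight c i j (alignmentSuffix (i := i) hm φ) := by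
  obtain ⟨hφ', hpiv⟩ := mem_alignmentsThrough.1 hφ
  have hmono := (mem_alignments.1 hφ').1.monotone
  have hpivot : c i j = c ((φ m : ℕ) + 1) ((m : ℕ) + 1) := by rw [hpiv, hm]
  rw [alignmentWeight, hpivot, Fin.prod_univ_mul_eq_prod_mul_prod m hm, alignmentWeight,
    tailWeight]
  congr 1
  · simp [alignmentPrefix_val hi hm hmono hpiv]
  · refine prod_congr rfl fun k _ => ?_
    rw [← alignmentSuffix_val hm hmono hpiv k]
    dsimp only
    congr 1 <;> omega

theorem sum_alignmentsThrough_mul_eq_fwd_mul_bwd (c : ℕ → ℕ → ℝ) (hi : 1 ≤ i) (hiT : i ≤ T)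
    (hm : (m : ℕ) + 1 = j) :
    (∑ φ ∈ alignmentsThrough T N i m, alignmentWeight c φ) * c i j = fwd c i j * bwd c T N i j := by
  rw [fwd_eq_sum, bwd_eq_sum, sum_mul_sum, ← sum_product', sum_mul]
  exact sum_nbij' (fun φ => (alignmentPrefix hi hm φ, alignmentSuffix hm φ))
    (fun p => alignmentGlue hi hiT p.1 p.2)
    (fun φ hφ => mem_product.2 ⟨alignmentPrefix_mem hi hm hφ, alignmentSuffix_mem hm hφ⟩)
    (fun p hp => alignmentGlue_mem hi hiT hm (mem_product.1 hp).1 (mem_product.1 hp).2)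
    (fun φ hφ => alignmentGlue_prefix_suffix hi hiT hm hφ)
    (fun p hp => Prod.ext (alignmentPrefix_glue hi hiT hm p.1 p.2)
      (alignmentSuffix_glue hi hiT hm (mem_product.1 hp).1 (mem_product.1 hp).2))
    (fun φ hφ => alignmentWeight_mul c hi hm hφ)

end Alignments

/-- Forward-backward edge decomposition: the total weight of all monotone alignments of
`z_{1..N}` to `x_{1..T}` that align `z_j` to `x_i` equals `fwd i j * bwd i j / c i j`.
Consequently, for every fixed `j`, `∑_i fwd i j * bwd i j / c i j = fwd T N`, so the
edge marginals `w i j = fwd i j * bwd i j / (c i j * fwd T N)` form a probability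
distribution over `i`. -/
theorem forward_backward_decomposition (c : ℕ → ℕ → ℝ) (hc : ∀ i j, 0 < c i j)
    (T N i j : ℕ) (hNT : N ≤ T)
    (hj : 1 ≤ j) (hjN : j ≤ N) (hi : 1 ≤ i) (hiT : i ≤ T) :
    (∑ φ ∈ Finset.univ.filter
        (fun φ : Fin N → Fin T =>
          StrictMono φ ∧ ((φ ⟨N - 1, by omega⟩ : Fin T) : ℕ) = T - 1
            ∧ ((φ ⟨j - 1, by omega⟩ : Fin T) : ℕ) = i - 1),
      ∏ k : Fin N, c ((φ k : ℕ) + 1) ((k : ℕ) + 1))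
      = fwd c i j * bwd c T N i j / c i j
    ∧ (∑ i' ∈ Finset.Icc 1 T, fwd c i' j * bwd c T N i' j / c i' j) = fwd c T N
    ∧ (∑ i' ∈ Finset.Icc 1 T,
        fwd c i' j * bwd c T N i' j / (c i' j * fwd c T N)) = 1 := by
  have hm : ((⟨j - 1, by omega⟩ : Fin N) : ℕ) + 1 = j := by simp only; omega
  have through : ∀ i' ∈ Icc 1 T, ∑ φ ∈ alignmentsThrough T N i' ⟨j - 1, by omega⟩,
      alignmentWeight c φ = fwd c i' j * bwd c T N i' j / c i' j := fun i' hi' => by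
    rw [mem_Icc] at hi'
    rw [eq_div_iff (hc i' j).ne', sum_alignmentsThrough_mul_eq_fwd_mul_bwd c hi'.1 hi'.2 hm]
  have total : ∑ i' ∈ Icc 1 T, fwd c i' j * bwd c T N i' j / c i' j = fwd c T N := by
    rw [← sum_congr rfl through, sum_Icc_sum_alignmentsThrough, fwd_eq_sum]
  refine ⟨?_, total, ?_⟩
  · rw [← through i (mem_Icc.2 ⟨hi, hiT⟩), alignmentsThrough_eq_filter (by omega) hi]
    rfl
  · simp_rw [← div_div]
    rw [← sum_div, total, div_self (fwd_pos hc hNT).ne']
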